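/- In the free graded-commutative algebra ⋀(α₁,α₂,β₁,β₂,γ₁,γ₂,η₁,η₂) with the differential d above, the 3-form κ = (1/3)(α₁β₁η₁ − α₁β₁η₂ − α₁β₂η₁ − 2α₁β₂η₂ − α₂β₁η₁ − 2α₂β₁η₂ − 2α₂β₂η₁ − α₂β₂η₂) satisfies dκ = β₁β₂ · (2α₁γ₂ − α₂γ₁ + α₁γ₁ + α₂γ₂). -/
import Mathlib


/-- The degree-1 generators α₁,α₂,β₁,β₂,γ₁,γ₂,η₁,η₂ of the free
graded-commutative algebra on eight degree-1 generators, realized as the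
exterior algebra of ℝ⁸ (indices 0,…,7 in that order). -/
noncomputable def gen (i : Fin 8) : ExteriorAlgebra ℝ (Fin 8 → ℝ) :=
  ExteriorAlgebra.ι ℝ (Pi.single i 1)


set_option maxHeartbeats 2000000

lemma gen_swap (i j : Fin 8) (h : j < i) : gen i * gen j = -(gen j * gen i) :=
  eq_neg_of_add_eq_zero_left
    (ExteriorAlgebra.ι_add_mul_swap (R := ℝ) (M := Fin 8 → ℝ) (Pi.single i 1) (Pi.single j 1))

lemma gen_sq (i : Fin 8) : gen i * gen i = 0 :=
  ExteriorAlgebra.ι_sq_zero _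

lemma gen_swap' (i j : Fin 8) (h : j < i) (x : ExteriorAlgebra ℝ (Fin 8 → ℝ)) :
    gen i * (gen j * x) = -(gen j * (gen i * x)) := by
  rw [← mul_assoc, gen_swap i j h, ← mul_assoc, neg_mul]

lemma gen_sq' (i : Fin 8) (x : ExteriorAlgebra ℝ (Fin 8 → ℝ)) :
    gen i * (gen i * x) = 0 := by
  rw [← mul_assoc, gen_sq, zero_mul]

/-- The 3-form κ = (1/3)(α₁β₁η₁ − α₁β₁η₂ − α₁β₂η₁ − 2α₁β₂η₂ − α₂β₁η₁
− 2α₂β₁η₂ − 2α₂β₂η₁ − α₂β₂η₂) satisfies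
dκ = β₁β₂·(2α₁γ₂ − α₂γ₁ + α₁γ₁ + α₂γ₂). -/
theorem stmt_18
    (d : ExteriorAlgebra ℝ (Fin 8 → ℝ) →ₗ[ℝ] ExteriorAlgebra ℝ (Fin 8 → ℝ))
    (hLeib : ∀ (v : Fin 8 → ℝ) (y : ExteriorAlgebra ℝ (Fin 8 → ℝ)),
      d (ExteriorAlgebra.ι ℝ v * y)
        = d (ExteriorAlgebra.ι ℝ v) * y - ExteriorAlgebra.ι ℝ v * d y)
    (hdα₁ : d (gen 0) = 0) (hdα₂ : d (gen 1) = 0)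
    (hdβ₁ : d (gen 2) = 0) (hdβ₂ : d (gen 3) = 0)
    (hdγ₁ : d (gen 4) = 0) (hdγ₂ : d (gen 5) = 0)
    (hdη₁ : d (gen 6)
      = -(gen 2 * gen 4) + gen 3 * gen 4 + gen 2 * gen 5 + 2 • (gen 3 * gen 5))
    (hdη₂ : d (gen 7)
      = 2 • (gen 2 * gen 4) + gen 3 * gen 4 + gen 2 * gen 5 - gen 3 * gen 5) :
    d ((1/3 : ℝ) •
        (gen 0 * gen 2 * gen 6 - gen 0 * gen 2 * gen 7 - gen 0 * gen 3 * gen 6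
          - 2 • (gen 0 * gen 3 * gen 7) - gen 1 * gen 2 * gen 6
          - 2 • (gen 1 * gen 2 * gen 7) - 2 • (gen 1 * gen 3 * gen 6)
          - gen 1 * gen 3 * gen 7))
      = gen 2 * gen 3 *
          (2 • (gen 0 * gen 5) - gen 1 * gen 4 + gen 0 * gen 4 + gen 1 * gen 5) := by
  have hL : ∀ (i : Fin 8) (y : ExteriorAlgebra ℝ (Fin 8 → ℝ)),
      d (gen i * y) = d (gen i) * y - gen i * d y := fun i y => hLeib (Pi.single i 1) y
  have key : ∀ (a b : Fin 8), d (gen a) = 0 → d (gen b) = 0 →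
      ∀ x, d (gen a * gen b * x) = gen a * gen b * d x := by
    intro a b ha hb x
    rw [mul_assoc, hL, ha, hL, hb, zero_mul, zero_mul, zero_sub, zero_sub,
      mul_neg, neg_neg, mul_assoc]
  rw [map_smul, map_sub, map_sub, map_sub, map_sub, map_sub, map_sub, map_sub,
    map_nsmul, map_nsmul, map_nsmul,
    key 0 2 hdα₁ hdβ₁, key 0 2 hdα₁ hdβ₁, key 0 3 hdα₁ hdβ₂, key 0 3 hdα₁ hdβ₂,
    key 1 2 hdα₂ hdβ₁, key 1 2 hdα₂ hdβ₁, key 1 3 hdα₂ hdβ₂, key 1 3 hdα₂ hdβ₂,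
    hdη₁, hdη₂]
  simp (config := { decide := true }) only [mul_assoc, smul_sub, smul_add, smul_neg,
    mul_add, add_mul, mul_sub, sub_mul, mul_neg, neg_mul, mul_smul_comm, smul_mul_assoc,
    gen_swap, gen_swap', gen_sq, gen_sq', mul_zero, zero_mul, neg_neg, neg_zero,
    add_zero, zero_add, sub_zero, zero_sub, smul_zero]
  module
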